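/- Equivalence of Method I and Method II nullsets on Cantor space: let m : [0,∞] → [0,∞] be monotone with m(r) > 0 for all r > 0 and m(2^{-n}) → 0 as n → ∞, and let H_m denote the Method II (metric outer/Hausdorff-type) measure on 2^ω with gauge m, i.e. the measure obtained from coverings by sets of arbitrarily small diameter weighted by m(diam). Then for every A ⊆ 2^ω: H_m(A) = 0 if and only if for every ε > 0 there is a countable set U of finite binary strings with A ⊆ ⋃_{σ ∈ U} N_σ and Σ_{σ ∈ U} m(2^{-|σ|}) ≤ ε. -/

import Mathlib

open MeasureTheory ENNReal

noncomputable local instance : MetricSpace (ℕ → Bool) := PiNat.metricSpace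

/-- The basic open cylinder `N_σ` of a finite binary string `σ` in Cantor space `2^ω`. -/
def cyl (σ : List Bool) : Set (ℕ → Bool) :=
  {x | ∀ i : Fin σ.length, x i = σ.get i}

/-!
In `2^ω` the distance of two points is `2^{-k}`, `k` the first index where
they differ. Hence a set of positive diameter has diameter exactly `2^{-k}`, `k` the least such
index over its pairs of points, and lies in the cylinder of length `k` through any of its points:
a Method II cover is turned into a cylinder cover of the same weight, up to cylinders of length
`k` with `m(2^{-k})` as small as we like for the sets of diameter `0`. Conversely, a cylinder
cover of weight less than `m(2^{-n})` uses only strings longer than `n`, since `m` is monotone,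
so Method I covers of small weight have small mesh.
-/

open Filter Metric PiNat Set Topology

namespace ENNReal

theorem two_zpow_neg_natCast_eq_ofReal (n : ℕ) :
    (2 : ℝ≥0∞) ^ (-(n : ℤ)) = ENNReal.ofReal ((1 / 2) ^ n) := by
  rw [ENNReal.ofReal_pow (by norm_num), one_div, ENNReal.ofReal_inv_of_pos two_pos,
    ENNReal.ofReal_ofNat, ENNReal.zpow_neg, zpow_natCast, ENNReal.inv_pow]

theorem two_zpow_neg_natCast_pos (n : ℕ) : 0 < (2 : ℝ≥0∞) ^ (-(n : ℤ)) :=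
  ENNReal.zpow_pos two_ne_zero ofNat_ne_top _

theorem antitone_two_zpow_neg_natCast : Antitone fun n : ℕ => (2 : ℝ≥0∞) ^ (-(n : ℤ)) :=
  fun _ _ h => ENNReal.zpow_le_of_le one_le_two (neg_le_neg (Int.ofNat_le.2 h))

theorem tendsto_two_zpow_neg_natCast :
    Tendsto (fun n : ℕ => (2 : ℝ≥0∞) ^ (-(n : ℤ))) atTop (𝓝 0) := by
  simp only [two_zpow_neg_natCast_eq_ofReal]
  rw [← ENNReal.ofReal_zero]
  exact ENNReal.tendsto_ofReal
    (_root_.tendsto_pow_atTop_nhds_zero_of_lt_one (by norm_num) (by norm_num))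

end ENNReal

namespace MeasureTheory.Measure

theorem exists_cover_tsum_lt_of_mkMetric_eq_zero {X : Type*} [EMetricSpace X]
    [MeasurableSpace X] [BorelSpace X] {m : ℝ≥0∞ → ℝ≥0∞} (hm : m 0 = 0) {A : Set X}
    (hA : mkMetric m A = 0) {ε : ℝ≥0∞} (hε : 0 < ε) :
    ∃ t : ℕ → Set X, A ⊆ ⋃ n, t n ∧ ∑' n, m (ediam (t n)) < ε := by
  rw [mkMetric_apply] at hA
  have h := ((iSup₂_eq_bot.1 hA) 1 one_pos).trans_lt hε
  simp only [iInf_lt_iff] at h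
  obtain ⟨t, hAt, -, ht⟩ := h
  refine ⟨t, hAt, ?_⟩
  convert ht using 3 with n
  rcases (t n).eq_empty_or_nonempty with h | h <;> simp [h, hm]

end MeasureTheory.Measure

namespace PiNat

variable {E : ℕ → Type*} [∀ n, TopologicalSpace (E n)] [∀ n, DiscreteTopology (E n)]

attribute [local instance] PiNat.metricSpace

theorem edist_eq_of_ne {x y : ∀ n, E n} (h : x ≠ y) :
    edist x y = 2 ^ (-(firstDiff x y : ℤ)) := by
  rw [edist_dist, dist_eq_of_ne h, two_zpow_neg_natCast_eq_ofReal]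

theorem mem_cylinder_iff_edist_le {x y : ∀ n, E n} {n : ℕ} :
    y ∈ cylinder x n ↔ edist y x ≤ 2 ^ (-(n : ℤ)) := by
  rw [mem_cylinder_iff_dist_le, edist_dist, two_zpow_neg_natCast_eq_ofReal,
    ENNReal.ofReal_le_ofReal_iff (by positivity)]

theorem subset_cylinder_of_ediam_le {s : Set (∀ n, E n)} {x : ∀ n, E n} (hx : x ∈ s) {n : ℕ}
    (h : ediam s ≤ 2 ^ (-(n : ℤ))) : s ⊆ cylinder x n :=
  fun _ hy => mem_cylinder_iff_edist_le.2 ((edist_le_ediam_of_mem hy hx).trans h)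

theorem ediam_eq_zero_or_exists_eq_two_zpow (s : Set (∀ n, E n)) :
    ediam s = 0 ∨ ∃ n : ℕ, ediam s = 2 ^ (-(n : ℤ)) := by
  classical
  by_cases hs : ∃ n, ∃ x ∈ s, ∃ y ∈ s, x ≠ y ∧ firstDiff x y = n
  · refine .inr ⟨Nat.find hs, le_antisymm (ediam_le fun x hx y hy => ?_) ?_⟩
    · rcases eq_or_ne x y with rfl | hxy
      · simp
      · rw [edist_eq_of_ne hxy]
        exact antitone_two_zpow_neg_natCast (Nat.find_min' hs ⟨x, hx, y, hy, hxy, rfl⟩)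
    · obtain ⟨x, hx, y, hy, hxy, hfd⟩ := Nat.find_spec hs
      rw [← hfd, ← edist_eq_of_ne hxy]
      exact edist_le_ediam_of_mem hx hy
  · push Not at hs
    exact .inl (ediam_subsingleton fun x hx y hy => by_contra fun hxy => hs _ x hx y hy hxy rfl)

end PiNat

theorem cyl_ofFn (x : ℕ → Bool) (n : ℕ) :
    cyl (List.ofFn fun i : Fin n => x i) = PiNat.cylinder x n := by
  ext y
  simp [cyl, PiNat.cylinder, Fin.forall_iff]

theorem mem_cylinder_of_mem_cyl {σ : List Bool} {x y : ℕ → Bool} (hx : x ∈ cyl σ)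
    (hy : y ∈ cyl σ) : y ∈ PiNat.cylinder x σ.length :=
  fun i hi => (hy ⟨i, hi⟩).trans (hx ⟨i, hi⟩).symm

theorem ediam_cyl_le (σ : List Bool) : ediam (cyl σ) ≤ 2 ^ (-(σ.length : ℤ)) :=
  ediam_le fun _ hx _ hy => mem_cylinder_iff_edist_le.1 (mem_cylinder_of_mem_cyl hy hx)

theorem exists_cyl_of_ediam_le {s : Set (ℕ → Bool)} {n : ℕ} (h : ediam s ≤ 2 ^ (-(n : ℤ))) :
    ∃ σ : List Bool, σ.length = n ∧ s ⊆ cyl σ := by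
  rcases s.eq_empty_or_nonempty with rfl | ⟨x, hx⟩
  · exact ⟨List.replicate n false, List.length_replicate, empty_subset _⟩
  · exact ⟨List.ofFn fun i : Fin n => x i, List.length_ofFn,
      cyl_ofFn x n ▸ subset_cylinder_of_ediam_le hx h⟩

def IsMethodINull (m : ℝ≥0∞ → ℝ≥0∞) (A : Set (ℕ → Bool)) : Prop :=
  ∀ ε : ℝ≥0∞, 0 < ε → ∃ U : Set (List Bool), U.Countable ∧ A ⊆ (⋃ σ ∈ U, cyl σ) ∧
    ∑' σ : U, m (2 ^ (-((σ : List Bool).length : ℤ))) ≤ ε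

section Gauge

variable {m : ℝ≥0∞ → ℝ≥0∞}

theorem exists_cyl_superset_le_add
    (hlim : Tendsto (fun n : ℕ => m (2 ^ (-(n : ℤ)))) atTop (𝓝 0)) (s : Set (ℕ → Bool))
    {η : ℝ≥0∞} (hη : 0 < η) :
    ∃ σ : List Bool, s ⊆ cyl σ ∧ m (2 ^ (-(σ.length : ℤ))) ≤ m (ediam s) + η := by
  rcases PiNat.ediam_eq_zero_or_exists_eq_two_zpow s with hs | ⟨n, hs⟩
  · obtain ⟨n, hn⟩ := (hlim.eventually_lt_const hη).exists
    obtain ⟨σ, rfl, hsσ⟩ := exists_cyl_of_ediam_le (n := n) (hs ▸ zero_le)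
    exact ⟨σ, hsσ, le_add_left hn.le⟩
  · obtain ⟨σ, rfl, hsσ⟩ := exists_cyl_of_ediam_le hs.le
    exact ⟨σ, hsσ, hs ▸ le_self_add⟩

theorem IsMethodINull.of_mkMetric_eq_zero (hmono : Monotone m)
    (hlim : Tendsto (fun n : ℕ => m (2 ^ (-(n : ℤ)))) atTop (𝓝 0)) {A : Set (ℕ → Bool)}
    (hA : Measure.mkMetric m A = 0) : IsMethodINull m A := by
  intro ε hε
  have hm0 : m 0 = 0 := le_antisymm (ge_of_tendsto' hlim fun _ => hmono zero_le) bot_le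
  obtain ⟨t, hAt, ht⟩ :=
    Measure.exists_cover_tsum_lt_of_mkMetric_eq_zero hm0 hA (ENNReal.half_pos hε.ne')
  obtain ⟨η, hη, hηε⟩ := exists_pos_sum_of_countable (ENNReal.half_pos hε.ne').ne' ℕ
  choose σ hσt hσm using fun n => exists_cyl_superset_le_add hlim (t n) (coe_pos.2 (hη n))
  refine ⟨range σ, countable_range σ, ?_, ?_⟩
  · rw [biUnion_range]
    exact hAt.trans (iUnion_mono hσt)
  · calc ∑' τ : range σ, m (2 ^ (-((τ : List Bool).length : ℤ)))
        ≤ ∑' n, m (2 ^ (-((σ n).length : ℤ))) :=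
          tsum_le_tsum_comp_of_surjective rangeFactorization_surjective _
      _ ≤ ∑' n, (m (ediam (t n)) + η n) := ENNReal.tsum_le_tsum hσm
      _ = ∑' n, m (ediam (t n)) + ∑' n, (η n : ℝ≥0∞) := ENNReal.tsum_add
      _ ≤ ε / 2 + ε / 2 := add_le_add ht.le hηε.le
      _ = ε := ENNReal.add_halves ε

theorem lt_length_of_tsum_lt (hmono : Monotone m) {U : Set (List Bool)} {n : ℕ}
    (hU : ∑' σ : U, m (2 ^ (-((σ : List Bool).length : ℤ))) < m (2 ^ (-(n : ℤ))))
    {σ : List Bool} (hσ : σ ∈ U) : n < σ.length := by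
  by_contra! h
  exact ((hmono (antitone_two_zpow_neg_natCast h)).trans
    (ENNReal.le_tsum (⟨σ, hσ⟩ : U))).not_gt hU

theorem IsMethodINull.exists_cover_lt_length (hmono : Monotone m)
    (hpos : ∀ r : ℝ≥0∞, 0 < r → 0 < m r) {A : Set (ℕ → Bool)} (hA : IsMethodINull m A)
    {ε : ℝ≥0∞} (hε : 0 < ε) (n : ℕ) :
    ∃ U : Set (List Bool), U.Countable ∧ A ⊆ (⋃ σ ∈ U, cyl σ) ∧
      ∑' σ : U, m (2 ^ (-((σ : List Bool).length : ℤ))) ≤ ε ∧ ∀ σ ∈ U, n < σ.length := by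
  obtain ⟨c, hc, hcε⟩ := exists_between (lt_min hε (hpos _ (two_zpow_neg_natCast_pos n)))
  obtain ⟨U, hU, hAU, hUc⟩ := hA c hc
  exact ⟨U, hU, hAU, hUc.trans (hcε.trans_le (min_le_left _ _)).le,
    fun _ => lt_length_of_tsum_lt hmono (hUc.trans_lt (hcε.trans_le (min_le_right _ _)))⟩

theorem IsMethodINull.mkMetric_eq_zero (hmono : Monotone m)
    (hpos : ∀ r : ℝ≥0∞, 0 < r → 0 < m r) {A : Set (ℕ → Bool)} (hA : IsMethodINull m A) :
    Measure.mkMetric m A = 0 := by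
  refine nonpos_iff_eq_zero.1 (le_of_forall_gt_imp_ge_of_dense fun ε hε => ?_)
  choose U hU hAU hUε hUlen using hA.exists_cover_lt_length hmono hpos hε
  have := fun n => (hU n).to_subtype
  have hdiam : ∀ n (σ : U n), ediam (cyl σ) ≤ 2 ^ (-(n : ℤ)) := fun n σ =>
    (ediam_cyl_le σ).trans (antitone_two_zpow_neg_natCast (hUlen n σ σ.2).le)
  have hcover : ∀ n, A ⊆ ⋃ σ : U n, cyl σ := fun n =>
    biUnion_eq_iUnion (U n) (fun σ _ => cyl σ) ▸ hAU n
  calc Measure.mkMetric m A ≤ liminf (fun n => ∑' σ : U n, m (ediam (cyl σ))) atTop :=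
        Measure.mkMetric_le_liminf_tsum A _ tendsto_two_zpow_neg_natCast _
          (.of_forall hdiam) (.of_forall hcover) m
    _ ≤ ε := liminf_le_of_frequently_le' (.of_forall fun n =>
        (ENNReal.tsum_le_tsum fun σ : U n => hmono (ediam_cyl_le σ)).trans (hUε n))

end Gauge

theorem stmt9 (m : ℝ≥0∞ → ℝ≥0∞) (hmono : Monotone m)
    (hpos : ∀ r : ℝ≥0∞, 0 < r → 0 < m r)
    (hlim : Filter.Tendsto (fun n : ℕ => m (2 ^ (-(n : ℤ)))) Filter.atTop (nhds 0))
    (A : Set (ℕ → Bool)) :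
    Measure.mkMetric m A = 0 ↔
      ∀ ε : ℝ≥0∞, 0 < ε → ∃ U : Set (List Bool), U.Countable ∧
        A ⊆ (⋃ σ ∈ U, cyl σ) ∧
        ∑' σ : U, m (2 ^ (-((σ : List Bool).length : ℤ))) ≤ ε :=
  ⟨IsMethodINull.of_mkMetric_eq_zero hmono hlim, IsMethodINull.mkMetric_eq_zero hmono hpos⟩
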